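/- Let X be an infinite, coarsely connected space. If X has Property (T), then X is not amenable; consequently, every representation π of ℂ_u[X] on a complex Hilbert space H satisfies H^π = {0}. -/

import Mathlib

open scoped ENNReal Classical

noncomputable section

namespace GeomPropT

variable {X : Type*}

/-- The tube of diameter `R` in `X × X`. -/
def Tube (X : Type*) [EMetricSpace X] (R : ℝ≥0∞) : Set (X × X) :=
  {p : X × X | edist p.1 p.2 ≤ R}

/-- A subset of `X × X` is controlled if it is contained in a tube of finite diameter. -/
def Controlled [EMetricSpace X] (E : Set (X × X)) : Prop :=
  ∃ R : ℝ≥0∞, R < ⊤ ∧ E ⊆ Tube X R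

/-- `X` has bounded geometry if balls of any given finite radius have uniformly
bounded cardinality. -/
def BoundedGeometry (X : Type*) [EMetricSpace X] : Prop :=
  ∀ R : ℝ≥0∞, R < ⊤ → ∃ N : ℕ, ∀ x : X,
    {y : X | edist x y ≤ R}.Finite ∧ {y : X | edist x y ≤ R}.ncard ≤ N

/-- Composition of subsets of `X × X`. -/
def compRel (E F : Set (X × X)) : Set (X × X) :=
  {p : X × X | ∃ z : X, (p.1, z) ∈ E ∧ (z, p.2) ∈ F}

/-- `compPow E n` is the `(n+1)`-fold composition `E^{∘(n+1)}`. -/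
def compPow (E : Set (X × X)) : ℕ → Set (X × X)
  | 0 => E
  | n + 1 => compRel E (compPow E n)

/-- A controlled set is generating if every controlled set is contained in some
iterated composition of it. -/
def Generating [EMetricSpace X] (E : Set (X × X)) : Prop :=
  Controlled E ∧ ∀ F : Set (X × X), Controlled F → ∃ n : ℕ, F ⊆ compPow E n

/-- `X` is monogenic if it admits a controlled generating set. -/
def Monogenic (X : Type*) [EMetricSpace X] : Prop :=
  ∃ E : Set (X × X), Generating E

/-- A "space": bounded geometry, monogenic, with at most countably many coarse
components. -/
structure IsSpace (X : Type*) [EMetricSpace X] : Prop where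
  boundedGeometry : BoundedGeometry X
  monogenic : Monogenic X
  countableComponents : Set.Countable {C : Set X | ∃ x : X, C = {y : X | edist x y < ⊤}}

/-- The support of a matrix. -/
def matSupport (T : X → X → ℂ) : Set (X × X) := {p : X × X | T p.1 p.2 ≠ 0}

/-- Membership in `ℂ_u[X]`: uniformly bounded entries and controlled support. -/
def CuElem [EMetricSpace X] (T : X → X → ℂ) : Prop :=
  (∃ M : ℝ, ∀ x y : X, ‖T x y‖ ≤ M) ∧ Controlled (matSupport T)

/-- The identity matrix. -/
def matOne : X → X → ℂ := fun x y => if x = y then 1 else 0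

/-- Matrix multiplication. -/
def matMul (T S : X → X → ℂ) : X → X → ℂ := fun x y => ∑' z : X, T x z * S z y

/-- Matrix adjoint. -/
def matStar (T : X → X → ℂ) : X → X → ℂ := fun x y => starRingEnd ℂ (T y x)

/-- Matrix powers. -/
def matPow (A : X → X → ℂ) : ℕ → X → X → ℂ
  | 0 => matOne
  | n + 1 => matMul A (matPow A n)

/-- A function `f ∈ ℓ∞(X)` viewed as a diagonal matrix. -/
def diag (f : X → ℂ) : X → X → ℂ := fun x y => if x = y then f x else 0

/-- The matrix of a partial translation: a `{0,1}`-matrix with at most one `1` in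
each row and each column, and controlled support. -/
def IsPartialTranslation [EMetricSpace X] (v : X → X → ℂ) : Prop :=
  (∀ x y : X, v x y = 0 ∨ v x y = 1) ∧
  (∀ x y y' : X, v x y = 1 → v x y' = 1 → y = y') ∧
  (∀ x x' y : X, v x y = 1 → v x' y = 1 → x = x') ∧
  Controlled (matSupport v)

/-- Membership in `S_X`: finite propagation permutation matrices. -/
def IsPermMatrix [EMetricSpace X] (A : X → X → ℂ) : Prop :=
  (∀ x y : X, A x y = 0 ∨ A x y = 1) ∧
  (∀ x : X, ∃! y : X, A x y = 1) ∧
  (∀ y : X, ∃! x : X, A x y = 1) ∧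
  Controlled (matSupport A)

/-- Membership in `A_X` with common row/column sum `c`. -/
def MemAX [EMetricSpace X] (A : X → X → ℂ) (c : ℂ) : Prop :=
  CuElem A ∧ ∀ x : X, HasSum (fun y => A x y) c ∧ HasSum (fun y => A y x) c

variable {H : Type*} [NormedAddCommGroup H] [InnerProductSpace ℂ H]

/-- A representation of `ℂ_u[X]`: a unital `*`-homomorphism into `B(H)`. -/
structure IsRepresentation [EMetricSpace X] [CompleteSpace H]
    (π : (X → X → ℂ) → (H →L[ℂ] H)) : Prop where
  map_one : π matOne = 1
  map_add : ∀ T S : X → X → ℂ, CuElem T → CuElem S → π (T + S) = π T + π S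
  map_smul : ∀ (c : ℂ) (T : X → X → ℂ), CuElem T → π (c • T) = c • π T
  map_mul : ∀ T S : X → X → ℂ, CuElem T → CuElem S → π (matMul T S) = π T * π S
  map_star : ∀ T : X → X → ℂ, CuElem T → π (matStar T) = ContinuousLinearMap.adjoint (π T)

/-- The subspace `H^π` of invariant vectors. -/
def invariantSubmodule [EMetricSpace X] (π : (X → X → ℂ) → (H →L[ℂ] H)) :
    Submodule ℂ H where
  carrier := {ξ : H | ∀ v : X → X → ℂ, IsPartialTranslation v →
    π v ξ = π (matMul v (matStar v)) ξ}
  add_mem' := by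
    intro a b ha hb v hv
    simp only [map_add, ha v hv, hb v hv]
  zero_mem' := by
    intro v hv
    simp
  smul_mem' := by
    intro c ξ hξ v hv
    simp only [map_smul, hξ v hv]

/-- `p` is the orthogonal projection onto `S`. -/
def IsOrthoProjOnto (p : H →L[ℂ] H) (S : Submodule ℂ H) : Prop :=
  ∀ ξ : H, p ξ ∈ S ∧ ξ - p ξ ∈ Sᗮ

/-- Geometric Property (T). -/
def HasPropertyT (X : Type*) [EMetricSpace X] : Prop :=
  ∀ E : Set (X × X), Generating E →
    ∃ c : ℝ, 0 < c ∧
      ∀ (H : Type) [NormedAddCommGroup H] [InnerProductSpace ℂ H] [CompleteSpace H]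
        (π : (X → X → ℂ) → (H →L[ℂ] H)), IsRepresentation π →
        ∀ ξ ∈ (invariantSubmodule π)ᗮ,
          ∃ v : X → X → ℂ, IsPartialTranslation v ∧ matSupport v ⊆ E ∧
            c * ‖ξ‖ ≤ ‖π v ξ - π (matMul v (matStar v)) ξ‖

/-- Bounded functions (elements of `ℓ∞(X)`). -/
def BddFun (f : X → ℂ) : Prop := ∃ M : ℝ, ∀ x : X, ‖f x‖ ≤ M

/-- `f ∘ t`, extended by `0`, where `t` is the partial translation with matrix `v`. -/
def translateFun (v : X → X → ℂ) (f : X → ℂ) : X → ℂ := fun y => ∑' x : X, v x y * f x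

/-- An invariant mean on `ℓ∞(X)`: a positive unital linear functional invariant
under partial translations. -/
def IsInvariantMean [EMetricSpace X] (φ : (X → ℂ) → ℂ) : Prop :=
  (∀ f g : X → ℂ, BddFun f → BddFun g → φ (f + g) = φ f + φ g) ∧
  (∀ (c : ℂ) (f : X → ℂ), BddFun f → φ (c • f) = c * φ f) ∧
  φ (fun _ => 1) = 1 ∧
  (∀ f : X → ℂ, BddFun f → (∀ x, 0 ≤ (f x).re ∧ (f x).im = 0) →
    0 ≤ (φ f).re ∧ (φ f).im = 0) ∧
  (∀ f : X → ℂ, BddFun f → ∀ v : X → X → ℂ, IsPartialTranslation v →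
    (∀ x : X, f x ≠ 0 → ∃ y : X, v x y = 1) → φ (translateFun v f) = φ f)

/-- `X` is amenable if `ℓ∞(X)` admits an invariant mean. -/
def IsAmenable (X : Type*) [EMetricSpace X] : Prop :=
  ∃ φ : (X → ℂ) → ℂ, IsInvariantMean φ

/-- A representation of `ℂ_u[X]` bundled with its Hilbert space. -/
structure HilbertRep (X : Type*) [EMetricSpace X] where
  H : Type
  [nacg : NormedAddCommGroup H]
  [ips : InnerProductSpace ℂ H]
  [cs : CompleteSpace H]
  π : (X → X → ℂ) → (H →L[ℂ] H)
  rep : IsRepresentation π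

attribute [instance] HilbertRep.nacg HilbertRep.ips HilbertRep.cs

/-!
Since `X` is infinite and coarsely connected, the regular representation of `ℂ_u[X]` on
`ℓ²(X) ≅ ℓ²(ℕ)` has no invariant vectors (they would be constant), so Property (T) gives it a
uniform spectral gap `c`. Tested on the indicator vector of a finite set `F`, the gap says that the
`R`-neighbourhood of `F` has at least `(1 + c²/2) |F|` points. Iterating, some neighbourhood doubles
every finite set, and Hall's marriage theorem turns this into an injection `X × {0,1} → X` of
bounded displacement: a paradoxical decomposition, which no invariant mean survives. Finally, a unit
invariant vector `ξ` of any representation `π` would make `f ↦ ⟪ξ, π (diag f) ξ⟫` an invariant mean.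
-/

section MatrixAlgebra

variable {X : Type*}

lemma diag_matMul (f : X → ℂ) (T : X → X → ℂ) :
    matMul (diag f) T = fun x y => f x * T x y := by
  funext x y
  rw [matMul, tsum_eq_single x fun z hz => by simp [diag, Ne.symm hz]]
  simp [diag]

lemma diag_mul_diag (f g : X → ℂ) : matMul (diag f) (diag g) = diag (f * g) := by
  rw [diag_matMul]
  funext x y
  by_cases h : x = y <;> simp [diag, h]

lemma diag_add (f g : X → ℂ) : diag f + diag g = diag (f + g) := by
  funext x y
  by_cases h : x = y <;> simp [diag, h]

lemma diag_smul (c : ℂ) (f : X → ℂ) : c • diag f = diag (c • f) := by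
  funext x y
  by_cases h : x = y <;> simp [diag, h]

lemma matStar_diag (f : X → ℂ) : matStar (diag f) = diag (star f) := by
  funext x y
  by_cases h : x = y
  · subst h; simp [matStar, diag]
  · simp [matStar, diag, h, Ne.symm h]

lemma diag_one : diag (1 : X → ℂ) = matOne := by
  funext x y
  by_cases h : x = y <;> simp [diag, matOne, h]

lemma BddFun.mul {f g : X → ℂ} (hf : BddFun f) (hg : BddFun g) : BddFun (f * g) := by
  obtain ⟨M, hM⟩ := hf
  obtain ⟨N, hN⟩ := hg
  refine ⟨M * N, fun x => ?_⟩
  rw [Pi.mul_apply, norm_mul]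
  exact mul_le_mul (hM x) (hN x) (norm_nonneg _) ((norm_nonneg _).trans (hM x))

lemma bddFun_indicator_one (s : Set X) : BddFun (s.indicator 1 : X → ℂ) :=
  ⟨1, fun x => by by_cases h : x ∈ s <;> simp [h]⟩

/-- For the matrix of a partial translation `t : A → B`, this is the range `B`. -/
def ptRange (v : X → X → ℂ) : Set X := {x | ∃ y, v x y = 1}

def graphMat (g : X → X) : X → X → ℂ := fun x y => if x = g y then 1 else 0

lemma ptRange_graphMat (g : X → X) : ptRange (graphMat g) = Set.range g := by
  ext x
  simp [ptRange, graphMat, eq_comm]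

lemma translateFun_graphMat (g : X → X) (f : X → ℂ) : translateFun (graphMat g) f = f ∘ g := by
  funext y
  rw [translateFun, tsum_eq_single (g y) fun x hx => by simp [graphMat, hx]]
  simp [graphMat]

lemma cuElem_diag [EMetricSpace X] {f : X → ℂ} (hf : BddFun f) : CuElem (diag f) := by
  obtain ⟨M, hM⟩ := hf
  refine ⟨⟨M, fun x y => ?_⟩, 0, ENNReal.zero_lt_top, fun p hp => ?_⟩
  · by_cases h : x = y
    · simpa [diag, h] using hM y
    · simpa [diag, h] using (norm_nonneg _).trans (hM x)
  · have : p.1 = p.2 := by by_contra h; exact hp (by simp [diag, h])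
    simp [Tube, this]

namespace IsPartialTranslation

variable [EMetricSpace X] {v : X → X → ℂ}

lemma norm_le_one (hv : IsPartialTranslation v) (x y : X) : ‖v x y‖ ≤ 1 := by
  rcases hv.1 x y with h | h <;> simp [h]

lemma cuElem (hv : IsPartialTranslation v) : CuElem v :=
  ⟨⟨1, hv.norm_le_one⟩, hv.2.2.2⟩

lemma cuElem_matStar (hv : IsPartialTranslation v) : CuElem (matStar v) := by
  obtain ⟨R, hR, hsub⟩ := hv.2.2.2
  refine ⟨⟨1, fun x y => by simpa [matStar] using hv.norm_le_one y x⟩, R, hR, fun p hp => ?_⟩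
  have := hsub (show (p.2, p.1) ∈ matSupport v by simpa [matSupport, matStar] using hp)
  simpa [Tube, edist_comm] using this

lemma cuElem_diag_matMul (hv : IsPartialTranslation v) {f : X → ℂ} (hf : BddFun f) :
    CuElem (matMul (diag f) v) := by
  obtain ⟨M, hM⟩ := hf
  obtain ⟨R, hR, hsub⟩ := hv.2.2.2
  rw [diag_matMul]
  refine ⟨⟨M, fun x y => ?_⟩, R, hR, fun p hp => hsub fun h => hp (by simp [h])⟩
  rw [norm_mul]
  nlinarith [hM x, hv.norm_le_one x y, norm_nonneg (f x), norm_nonneg (v x y)]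

lemma matMul_matStar (hv : IsPartialTranslation v) :
    matMul v (matStar v) = diag ((ptRange v).indicator 1) := by
  funext x x'
  have hrow : ∀ y, v x y * matStar v y x' = if x = x' ∧ v x y = 1 then 1 else 0 := by
    intro y
    rcases hv.1 x y with h | h
    · simp [h]
    · rcases hv.1 x' y with h' | h'
      · have : x ≠ x' := fun hxx => by simp_all
        simp [matStar, h, h', this]
      · simp [matStar, h', hv.2.2.1 x x' y h h']
  simp only [matMul, hrow]
  by_cases hxx : x = x'
  · subst hxx
    by_cases hx : x ∈ ptRange v
    · obtain ⟨y₀, hy₀⟩ := hx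
      rw [tsum_eq_single y₀ fun y hy => by simpa using fun h => hy (hv.2.1 x y y₀ h hy₀)]
      simp [diag, hy₀, show x ∈ ptRange v from ⟨y₀, hy₀⟩]
    · simp only [true_and, diag, if_true]
      have : ∀ y, v x y ≠ 1 := fun y hy => hx ⟨y, hy⟩
      simp [this, hx]
  · simp [hxx, diag]

lemma matStar_matMul_diag_matMul (hv : IsPartialTranslation v) (f : X → ℂ) :
    matMul (matStar v) (matMul (diag f) v) = diag (translateFun v f) := by
  rw [diag_matMul]
  funext y y'
  have hcol : ∀ z, matStar v y z * (f z * v z y') = if y = y' then v z y * f z else 0 := by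
    intro z
    rcases hv.1 z y with h | h
    · by_cases hyy : y = y' <;> simp_all [matStar]
    · rcases hv.1 z y' with h' | h'
      · have : y ≠ y' := fun hyy => by simp_all
        simp [matStar, h, h', this]
      · simp [matStar, h', hv.2.1 z y y' h h']
  simp only [matMul, hcol]
  by_cases hyy : y = y' <;> simp [hyy, diag, translateFun]

end IsPartialTranslation

lemma isPartialTranslation_graphMat [EMetricSpace X] {g : X → X} (hg : Function.Injective g)
    {R : ℝ≥0∞} (hR : R < ⊤) (hgR : ∀ x, edist (g x) x ≤ R) :
    IsPartialTranslation (graphMat g) := by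
  refine ⟨fun x y => ?_, fun x y y' h h' => ?_, fun x x' y h h' => ?_, R, hR, fun p hp => ?_⟩
  · by_cases h : x = g y <;> simp [graphMat, h]
  · simp only [graphMat, ite_eq_left_iff, zero_ne_one, imp_false, not_not] at h h'
    exact hg (h.symm.trans h')
  · simp only [graphMat, ite_eq_left_iff, zero_ne_one, imp_false, not_not] at h h'
    exact h.trans h'.symm
  · have : p.1 = g p.2 := by by_contra h; exact hp (if_neg h)
    simpa [Tube, this] using hgR p.2

end MatrixAlgebra

section InvariantMean

open scoped InnerProductSpace

variable {X : Type*} [EMetricSpace X]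
variable {H : Type*} [NormedAddCommGroup H] [InnerProductSpace ℂ H] [CompleteSpace H]
  {π : (X → X → ℂ) → (H →L[ℂ] H)}

lemma IsRepresentation.map_diag_mul (hπ : IsRepresentation π) {f g : X → ℂ} (hf : BddFun f)
    (hg : BddFun g) : π (diag (f * g)) = π (diag f) * π (diag g) := by
  rw [← diag_mul_diag, hπ.map_mul _ _ (cuElem_diag hf) (cuElem_diag hg)]

lemma IsRepresentation.inner_map_diag_left (hπ : IsRepresentation π) {f : X → ℂ}
    (hf : BddFun f) (hreal : star f = f) (a b : H) :
    ⟪π (diag f) a, b⟫_ℂ = ⟪a, π (diag f) b⟫_ℂ := by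
  have hsa : π (diag f) = ContinuousLinearMap.adjoint (π (diag f)) := by
    conv_lhs => rw [← hreal, ← matStar_diag]
    exact hπ.map_star _ (cuElem_diag hf)
  conv_lhs => rw [hsa]
  exact ContinuousLinearMap.adjoint_inner_left _ _ _

/-- A nonnegative `f` is the square of the self-adjoint `diag (√f)`. -/
lemma IsRepresentation.inner_map_diag_nonneg (hπ : IsRepresentation π) {f : X → ℂ}
    (hf : BddFun f) (hpos : ∀ x, 0 ≤ (f x).re ∧ (f x).im = 0) (ξ : H) :
    0 ≤ (⟪ξ, π (diag f) ξ⟫_ℂ).re ∧ (⟪ξ, π (diag f) ξ⟫_ℂ).im = 0 := by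
  set g : X → ℂ := fun x => (Real.sqrt (f x).re : ℂ)
  have hg : BddFun g := by
    obtain ⟨M, hM⟩ := hf
    refine ⟨Real.sqrt M, fun x => ?_⟩
    simp only [g, Complex.norm_real, Real.norm_eq_abs, abs_of_nonneg (Real.sqrt_nonneg _)]
    exact Real.sqrt_le_sqrt ((Complex.re_le_norm (f x)).trans (hM x))
  have hgg : g * g = f := by
    funext x
    apply Complex.ext <;> simp [g, Real.mul_self_sqrt (hpos x).1, (hpos x).2]
  have hg_real : star g = g := by
    funext x
    simp [g, Complex.conj_ofReal]
  have key : ⟪ξ, π (diag f) ξ⟫_ℂ = ((‖π (diag g) ξ‖ ^ 2 : ℝ) : ℂ) := by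
    rw [← hgg, hπ.map_diag_mul hg hg, mul_apply_eq_comp,
      ← hπ.inner_map_diag_left hg hg_real, inner_self_eq_norm_sq_to_K]
    norm_cast
  rw [key, Complex.ofReal_re, Complex.ofReal_im]
  exact ⟨by positivity, rfl⟩

lemma inner_map_diag_translateFun (hπ : IsRepresentation π) {ξ : H}
    (hξ : ξ ∈ invariantSubmodule π) {f : X → ℂ} (hf : BddFun f) {v : X → X → ℂ}
    (hv : IsPartialTranslation v) (hsupp : ∀ x, f x ≠ 0 → ∃ y, v x y = 1) :
    ⟪ξ, π (diag (translateFun v f)) ξ⟫_ℂ = ⟪ξ, π (diag f) ξ⟫_ℂ := by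
  set P : X → ℂ := (ptRange v).indicator 1
  have hP : BddFun P := bddFun_indicator_one _
  have hP_real : star P = P := by
    funext x
    by_cases h : x ∈ ptRange v <;> simp [P, h]
  have hvξ : π v ξ = π (diag P) ξ := by rw [hξ v hv, hv.matMul_matStar]
  have hfP : P * f * P = f := by
    funext x
    by_cases hx : f x = 0
    · simp [hx]
    · have : x ∈ ptRange v := hsupp x hx
      simp [P, this]
  calc ⟪ξ, π (diag (translateFun v f)) ξ⟫_ℂ
      = ⟪ξ, π (matStar v) (π (diag f) (π v ξ))⟫_ℂ := by
        rw [← hv.matStar_matMul_diag_matMul,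
          hπ.map_mul _ _ hv.cuElem_matStar (hv.cuElem_diag_matMul hf),
          hπ.map_mul _ _ (cuElem_diag hf) hv.cuElem]
        rfl
    _ = ⟪π (diag P) ξ, π (diag f) (π (diag P) ξ)⟫_ℂ := by
        rw [hπ.map_star _ hv.cuElem, ContinuousLinearMap.adjoint_inner_right, hvξ]
    _ = ⟪ξ, π (diag f) ξ⟫_ℂ := by
        rw [hπ.inner_map_diag_left hP hP_real, ← mul_apply_eq_comp,
          ← mul_apply_eq_comp, ← hπ.map_diag_mul hP hf,
          ← hπ.map_diag_mul (hP.mul hf) hP, hfP]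

theorem isInvariantMean_of_mem_invariantSubmodule (hπ : IsRepresentation π) {ξ : H}
    (hξ : ξ ∈ invariantSubmodule π) (hξ1 : ‖ξ‖ = 1) :
    IsInvariantMean fun f : X → ℂ => ⟪ξ, π (diag f) ξ⟫_ℂ := by
  refine ⟨fun f g hf hg => ?_, fun c f hf => ?_, ?_, fun f hf hpos => ?_,
    fun f hf v hv hsupp => inner_map_diag_translateFun hπ hξ hf hv hsupp⟩
  · dsimp only
    rw [← diag_add, hπ.map_add _ _ (cuElem_diag hf) (cuElem_diag hg),
      add_apply, inner_add_right]
  · dsimp only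
    rw [← diag_smul, hπ.map_smul _ _ (cuElem_diag hf), smul_apply,
      inner_smul_right]
  · dsimp only
    rw [show (fun _ : X => (1 : ℂ)) = 1 from rfl, diag_one, hπ.map_one,
      one_apply_eq_self, inner_self_eq_norm_sq_to_K, hξ1]
    simp
  · exact hπ.inner_map_diag_nonneg hf hpos ξ

theorem isAmenable_of_invariantSubmodule_ne_bot (hπ : IsRepresentation π)
    (hne : invariantSubmodule π ≠ ⊥) : IsAmenable X := by
  obtain ⟨ξ, hξ, hξ0⟩ := Submodule.exists_mem_ne_zero_of_ne_bot hne
  refine ⟨_, isInvariantMean_of_mem_invariantSubmodule hπ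
    ((invariantSubmodule π).smul_mem ((‖ξ‖⁻¹ : ℝ) : ℂ) hξ) ?_⟩
  rw [norm_smul, Complex.norm_real, Real.norm_eq_abs, abs_inv, abs_norm,
    inv_mul_cancel₀ (norm_ne_zero_iff.mpr hξ0)]

end InvariantMean

section UnifSparse

open scoped lp InnerProductSpace

variable {ι : Type*} {A B : ι → ι → ℂ}

def IsUnifSparse (B : ι → ι → ℂ) : Prop :=
  (∃ M, ∀ i j, ‖B i j‖ ≤ M) ∧
  (∃ N : ℕ, ∀ i, ∃ s : Finset ι, s.card ≤ N ∧ ∀ j ∉ s, B i j = 0) ∧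
  (∃ N : ℕ, ∀ j, ∃ s : Finset ι, s.card ≤ N ∧ ∀ i ∉ s, B i j = 0)

lemma sum_le_card_mul_of_eq_zero {f : ι → ℝ} {M : ℝ} (hf0 : ∀ i, 0 ≤ f i)
    (hfM : ∀ i, f i ≤ M) {r : Finset ι} (hr : ∀ i ∉ r, f i = 0) (s : Finset ι) :
    ∑ i ∈ s, f i ≤ r.card * M :=
  calc ∑ i ∈ s, f i ≤ ∑ i ∈ s ∪ r, f i :=
        Finset.sum_le_sum_of_subset_of_nonneg Finset.subset_union_left fun i _ _ => hf0 i
    _ = ∑ i ∈ r, f i :=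
        (Finset.sum_subset Finset.subset_union_right fun i _ hi => hr i hi).symm
    _ ≤ r.card * M := by simpa using Finset.sum_le_card_nsmul r f M fun i _ => hfM i

lemma sum_norm_sq_le_norm_sq (ξ : ℓ²(ι, ℂ)) (s : Finset ι) :
    ∑ i ∈ s, ‖ξ i‖ ^ 2 ≤ ‖ξ‖ ^ 2 := by
  simpa [Real.rpow_two] using lp.sum_rpow_le_norm_rpow (p := 2) (by norm_num) ξ s

lemma matMul_eq_sum_of_row {i : ι} {s : Finset ι} (hs : ∀ k ∉ s, A i k = 0) (j : ι) :
    matMul A B i j = ∑ k ∈ s, A i k * B k j :=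
  tsum_eq_sum fun k hk => by rw [hs k hk, zero_mul]

lemma matMul_eq_sum_of_col {j : ι} {s : Finset ι} (hs : ∀ k ∉ s, B k j = 0) (i : ι) :
    matMul A B i j = ∑ k ∈ s, A i k * B k j :=
  tsum_eq_sum fun k hk => by rw [hs k hk, mul_zero]

lemma isUnifSparse_matOne : IsUnifSparse (matOne : ι → ι → ℂ) := by
  have hsupp : ∀ i j : ι, j ∉ ({i} : Finset ι) → matOne i j = (0 : ℂ) := fun i j hj => by
    simp [matOne, Ne.symm (Finset.notMem_singleton.mp hj)]
  refine ⟨⟨1, fun i j => by by_cases h : i = j <;> simp [matOne, h]⟩,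
    ⟨1, fun i => ⟨{i}, by simp, hsupp i⟩⟩, ⟨1, fun j => ⟨{j}, by simp, fun i hi => ?_⟩⟩⟩
  simpa [matOne, eq_comm] using hsupp j i hi

lemma apply_eq_inner_single (ζ : ℓ²(ι, ℂ)) (i : ι) : ζ i = ⟪lp.single 2 i (1 : ℂ), ζ⟫_ℂ := by
  simp [lp.inner_single_left]

namespace IsUnifSparse

lemma exists_sum_norm_le (hB : IsUnifSparse B) : ∃ C, 0 ≤ C ∧
    (∀ i (s : Finset ι), ∑ j ∈ s, ‖B i j‖ ≤ C) ∧ ∀ j (s : Finset ι), ∑ i ∈ s, ‖B i j‖ ≤ C := by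
  obtain ⟨⟨M, hM⟩, ⟨N₁, hrow⟩, ⟨N₂, hcol⟩⟩ := hB
  have hM' : ∀ i j, ‖B i j‖ ≤ max M 0 := fun i j => (hM i j).trans (le_max_left _ _)
  refine ⟨(N₁ + N₂) * max M 0, by positivity, fun i s => ?_, fun j s => ?_⟩
  · obtain ⟨r, hr, hr0⟩ := hrow i
    refine (sum_le_card_mul_of_eq_zero (r := r) (fun _ => norm_nonneg _) (hM' i)
      (fun j hj => by simp [hr0 j hj]) s).trans ?_
    gcongr
    exact_mod_cast hr.trans (Nat.le_add_right _ _)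
  · obtain ⟨r, hr, hr0⟩ := hcol j
    refine (sum_le_card_mul_of_eq_zero (r := r) (fun _ => norm_nonneg _) (fun i => hM' i j)
      (fun i hi => by simp [hr0 i hi]) s).trans ?_
    gcongr
    exact_mod_cast hr.trans (Nat.le_add_left _ _)

/-- The Schur test: Cauchy–Schwarz with weights `‖B i j‖`, then exchange the two sums. -/
lemma exists_sum_norm_tsum_sq_le (hB : IsUnifSparse B) : ∃ C, 0 ≤ C ∧
    ∀ (ξ : ℓ²(ι, ℂ)) (S : Finset ι), ∑ i ∈ S, ‖∑' j, B i j * ξ j‖ ^ 2 ≤ C ^ 2 * ‖ξ‖ ^ 2 := by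
  obtain ⟨C, hC, hrowC, hcolC⟩ := hB.exists_sum_norm_le
  obtain ⟨N, hrow⟩ := hB.2.1
  choose r _ hr using hrow
  refine ⟨C, hC, fun ξ S => ?_⟩
  set J := S.biUnion r
  have hrowJ : ∀ i ∈ S, ∑' j, B i j * ξ j = ∑ j ∈ J, B i j * ξ j := fun i hi =>
    tsum_eq_sum fun j hj => by
      rw [hr i j fun h => hj (Finset.mem_biUnion.mpr ⟨i, hi, h⟩), zero_mul]
  have hCS : ∀ i ∈ S, ‖∑' j, B i j * ξ j‖ ^ 2 ≤ C * ∑ j ∈ J, ‖B i j‖ * ‖ξ j‖ ^ 2 := by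
    intro i hi
    calc ‖∑' j, B i j * ξ j‖ ^ 2 ≤ (∑ j ∈ J, ‖B i j‖ * ‖ξ j‖) ^ 2 := by
          rw [hrowJ i hi]
          gcongr
          exact (norm_sum_le _ _).trans_eq (by simp)
      _ ≤ (∑ j ∈ J, ‖B i j‖) * ∑ j ∈ J, ‖B i j‖ * ‖ξ j‖ ^ 2 :=
          Finset.sum_sq_le_sum_mul_sum_of_sq_le_mul J (fun _ _ => norm_nonneg _)
            (fun _ _ => by positivity) fun j _ => (by ring : _ = _).le
      _ ≤ C * ∑ j ∈ J, ‖B i j‖ * ‖ξ j‖ ^ 2 := by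
          gcongr
          exact hrowC i J
  calc ∑ i ∈ S, ‖∑' j, B i j * ξ j‖ ^ 2
      ≤ ∑ i ∈ S, C * ∑ j ∈ J, ‖B i j‖ * ‖ξ j‖ ^ 2 := Finset.sum_le_sum hCS
    _ = C * ∑ j ∈ J, (∑ i ∈ S, ‖B i j‖) * ‖ξ j‖ ^ 2 := by
        rw [← Finset.mul_sum, Finset.sum_comm]
        simp_rw [Finset.sum_mul]
    _ ≤ C * ∑ j ∈ J, C * ‖ξ j‖ ^ 2 := by
        gcongr with j
        exact hcolC j S
    _ ≤ C ^ 2 * ‖ξ‖ ^ 2 := by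
        rw [← Finset.mul_sum, ← mul_assoc, ← sq]
        gcongr
        exact sum_norm_sq_le_norm_sq ξ J

lemma summable_mul_row (hB : IsUnifSparse B) (ξ : ι → ℂ) (i : ι) :
    Summable fun j => B i j * ξ j := by
  obtain ⟨N, hrow⟩ := hB.2.1
  obtain ⟨s, -, hs⟩ := hrow i
  exact summable_of_ne_finset_zero fun j hj => by rw [hs j hj, zero_mul]

lemma exists_clm (hB : IsUnifSparse B) :
    ∃ T : ℓ²(ι, ℂ) →L[ℂ] ℓ²(ι, ℂ), ∀ ξ i, T ξ i = ∑' j, B i j * ξ j := by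
  obtain ⟨C, hC, hCS⟩ := hB.exists_sum_norm_tsum_sq_le
  have hmem : ∀ ξ : ℓ²(ι, ℂ), Memℓp (fun i => ∑' j, B i j * ξ j) 2 := fun ξ =>
    memℓp_gen' (C := C ^ 2 * ‖ξ‖ ^ 2) fun S => by simpa [Real.rpow_two] using hCS ξ S
  let L : ℓ²(ι, ℂ) →ₗ[ℂ] ℓ²(ι, ℂ) :=
    { toFun := fun ξ => ⟨_, hmem ξ⟩
      map_add' := fun ξ η => lp.ext <| funext fun i => by
        simp [mul_add, (hB.summable_mul_row ξ i).tsum_add (hB.summable_mul_row η i)]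
        rfl
      map_smul' := fun c ξ => lp.ext <| funext fun i => by
        simp [mul_left_comm _ c, tsum_mul_left] }
  refine ⟨L.mkContinuous C fun ξ => ?_, fun ξ i => rfl⟩
  refine lp.norm_le_of_forall_sum_le (p := 2) (by norm_num) (by positivity) fun S => ?_
  change ∑ i ∈ S, ‖∑' j, B i j * ξ j‖ ^ (2 : ℝ≥0∞).toReal ≤ (C * ‖ξ‖) ^ (2 : ℝ≥0∞).toReal
  simpa [Real.rpow_two, mul_pow] using hCS ξ S

lemma add (hA : IsUnifSparse A) (hB : IsUnifSparse B) : IsUnifSparse (A + B) := by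
  obtain ⟨⟨M, hM⟩, ⟨N, hrow⟩, ⟨N', hcol⟩⟩ := hA
  obtain ⟨⟨L, hL⟩, ⟨K, hrow'⟩, ⟨K', hcol'⟩⟩ := hB
  refine ⟨⟨M + L, fun i j => (norm_add_le _ _).trans (add_le_add (hM i j) (hL i j))⟩,
    ⟨N + K, fun i => ?_⟩, ⟨N' + K', fun j => ?_⟩⟩
  · obtain ⟨s, hs, hs0⟩ := hrow i
    obtain ⟨t, ht, ht0⟩ := hrow' i
    refine ⟨s ∪ t, (Finset.card_union_le _ _).trans (add_le_add hs ht), fun j hj => ?_⟩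
    simp only [Finset.mem_union, not_or] at hj
    simp [hs0 j hj.1, ht0 j hj.2]
  · obtain ⟨s, hs, hs0⟩ := hcol j
    obtain ⟨t, ht, ht0⟩ := hcol' j
    refine ⟨s ∪ t, (Finset.card_union_le _ _).trans (add_le_add hs ht), fun i hi => ?_⟩
    simp only [Finset.mem_union, not_or] at hi
    simp [hs0 i hi.1, ht0 i hi.2]

lemma smul (c : ℂ) (hB : IsUnifSparse B) : IsUnifSparse (c • B) := by
  obtain ⟨⟨M, hM⟩, ⟨N, hrow⟩, ⟨N', hcol⟩⟩ := hB
  refine ⟨⟨‖c‖ * M, fun i j => ?_⟩, ⟨N, fun i => ?_⟩, ⟨N', fun j => ?_⟩⟩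
  · simpa [norm_mul] using mul_le_mul_of_nonneg_left (hM i j) (norm_nonneg c)
  · obtain ⟨s, hs, hs0⟩ := hrow i
    exact ⟨s, hs, fun j hj => by simp [hs0 j hj]⟩
  · obtain ⟨s, hs, hs0⟩ := hcol j
    exact ⟨s, hs, fun i hi => by simp [hs0 i hi]⟩

lemma matStar (hB : IsUnifSparse B) : IsUnifSparse (matStar B) := by
  obtain ⟨⟨M, hM⟩, ⟨N, hrow⟩, ⟨N', hcol⟩⟩ := hB
  refine ⟨⟨M, fun i j => by simpa [GeomPropT.matStar] using hM j i⟩,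
    ⟨N', fun i => ?_⟩, ⟨N, fun j => ?_⟩⟩
  · obtain ⟨s, hs, hs0⟩ := hcol i
    exact ⟨s, hs, fun j hj => by simp [GeomPropT.matStar, hs0 j hj]⟩
  · obtain ⟨s, hs, hs0⟩ := hrow j
    exact ⟨s, hs, fun i hi => by simp [GeomPropT.matStar, hs0 i hi]⟩

lemma matMul (hA : IsUnifSparse A) (hB : IsUnifSparse B) : IsUnifSparse (matMul A B) := by
  obtain ⟨C, -, hrowC, -⟩ := hA.exists_sum_norm_le
  obtain ⟨M, hM⟩ := hB.1
  obtain ⟨⟨N, hrow⟩, ⟨N', hcol⟩⟩ := hA.2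
  obtain ⟨⟨K, hrow'⟩, ⟨K', hcol'⟩⟩ := hB.2
  choose r hr hr0 using hrow
  choose r' hr' hr0' using hrow'
  choose c hc hc0 using hcol
  choose c' hc' hc0' using hcol'
  refine ⟨⟨C * max M 0, fun i j => ?_⟩, ⟨N * K, fun i => ?_⟩, ⟨K' * N', fun j => ?_⟩⟩
  · rw [matMul_eq_sum_of_row (hr0 i)]
    calc ‖∑ k ∈ r i, A i k * B k j‖ ≤ ∑ k ∈ r i, ‖A i k‖ * max M 0 :=
          (norm_sum_le _ _).trans <| Finset.sum_le_sum fun k _ => by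
            rw [norm_mul]
            gcongr
            exact (hM k j).trans (le_max_left _ _)
      _ ≤ C * max M 0 := by
          rw [← Finset.sum_mul]
          gcongr
          exact hrowC i _
  · refine ⟨(r i).biUnion r', Finset.card_biUnion_le_card_mul _ _ _ (fun k _ => hr' k) |>.trans
      (Nat.mul_le_mul_right _ (hr i)), fun j hj => ?_⟩
    rw [matMul_eq_sum_of_row (hr0 i)]
    exact Finset.sum_eq_zero fun k hk => by
      rw [hr0' k j fun h => hj (Finset.mem_biUnion.mpr ⟨k, hk, h⟩), mul_zero]
  · refine ⟨(c' j).biUnion c, Finset.card_biUnion_le_card_mul _ _ _ (fun k _ => hc k) |>.trans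
      (Nat.mul_le_mul_right _ (hc' j)), fun i hi => ?_⟩
    rw [matMul_eq_sum_of_col (hc0' j)]
    exact Finset.sum_eq_zero fun k hk => by
      rw [hc0 k i fun h => hi (Finset.mem_biUnion.mpr ⟨k, hk, h⟩), zero_mul]

end IsUnifSparse

/-- `0` unless `B` is uniformly sparse. -/
def matOp (B : ι → ι → ℂ) : ℓ²(ι, ℂ) →L[ℂ] ℓ²(ι, ℂ) :=
  if hB : IsUnifSparse B then hB.exists_clm.choose else 0

lemma IsUnifSparse.matOp_apply (hB : IsUnifSparse B) (ξ : ℓ²(ι, ℂ)) (i : ι) :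
    matOp B ξ i = ∑' j, B i j * ξ j := by
  rw [matOp, dif_pos hB]
  exact hB.exists_clm.choose_spec ξ i

lemma matOp_matOne : matOp (matOne : ι → ι → ℂ) = 1 := by
  refine ContinuousLinearMap.ext fun ξ => lp.ext <| funext fun i => ?_
  rw [isUnifSparse_matOne.matOp_apply, tsum_eq_single i fun j hj => by simp [matOne, Ne.symm hj]]
  simp [matOne]

lemma matOp_add (hA : IsUnifSparse A) (hB : IsUnifSparse B) :
    matOp (A + B) = matOp A + matOp B := by
  refine ContinuousLinearMap.ext fun ξ => lp.ext <| funext fun i => ?_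
  simp only [(hA.add hB).matOp_apply, add_apply, lp.coeFn_add, Pi.add_apply, hA.matOp_apply,
    hB.matOp_apply, add_mul]
  exact (hA.summable_mul_row ξ i).tsum_add (hB.summable_mul_row ξ i)

lemma matOp_smul (c : ℂ) (hB : IsUnifSparse B) : matOp (c • B) = c • matOp B := by
  refine ContinuousLinearMap.ext fun ξ => lp.ext <| funext fun i => ?_
  simp only [(hB.smul c).matOp_apply, smul_apply, lp.coeFn_smul, Pi.smul_apply, hB.matOp_apply,
    smul_eq_mul, mul_assoc, tsum_mul_left]

lemma matOp_matMul (hA : IsUnifSparse A) (hB : IsUnifSparse B) :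
    matOp (matMul A B) = matOp A * matOp B := by
  refine ContinuousLinearMap.ext fun ξ => lp.ext <| funext fun i => ?_
  obtain ⟨N, hrow⟩ := hA.2.1
  obtain ⟨K, hrow'⟩ := hB.2.1
  obtain ⟨r, -, hr0⟩ := hrow i
  choose r' _ hr0' using hrow'
  have hJ : ∀ k ∈ r, ∀ j ∉ r.biUnion r', B k j = 0 := fun k hk j hj =>
    hr0' k j fun h => hj (Finset.mem_biUnion.mpr ⟨k, hk, h⟩)
  rw [mul_apply_eq_comp, (hA.matMul hB).matOp_apply, hA.matOp_apply,
    tsum_eq_sum (s := r.biUnion r') fun j hj => by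
      rw [matMul_eq_sum_of_row hr0, Finset.sum_eq_zero fun k hk => by rw [hJ k hk j hj, mul_zero],
        zero_mul],
    tsum_eq_sum (s := r) fun k hk => by rw [hr0 k hk, zero_mul]]
  simp_rw [matMul_eq_sum_of_row hr0, hB.matOp_apply, Finset.sum_mul]
  rw [Finset.sum_comm]
  refine Finset.sum_congr rfl fun k hk => ?_
  rw [tsum_eq_sum (s := r.biUnion r') fun j hj => by rw [hJ k hk j hj, zero_mul], Finset.mul_sum]
  simp_rw [mul_assoc]

lemma matOp_matStar (hB : IsUnifSparse B) :
    matOp (matStar B) = ContinuousLinearMap.adjoint (matOp B) := by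
  refine ContinuousLinearMap.ext fun η => lp.ext <| funext fun i => ?_
  have hcol : ∀ k, matOp B (lp.single 2 i 1) k = B k i := fun k => by
    rw [hB.matOp_apply, tsum_eq_single i fun j hj => by simp [lp.single_apply, hj]]
    simp
  rw [apply_eq_inner_single (ContinuousLinearMap.adjoint _ η),
    ContinuousLinearMap.adjoint_inner_right, lp.inner_eq_tsum, hB.matStar.matOp_apply]
  simp [hcol, GeomPropT.matStar, mul_comm]

end UnifSparse

section RegularRepresentation

open scoped lp

variable {X ι : Type*}

def transportMat (e : X ≃ ι) (T : X → X → ℂ) : ι → ι → ℂ := fun i j => T (e.symm i) (e.symm j)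

lemma transportMat_matMul (e : X ≃ ι) (T S : X → X → ℂ) :
    transportMat e (matMul T S) = matMul (transportMat e T) (transportMat e S) := by
  funext i j
  exact (e.symm.tsum_eq fun z => T (e.symm i) z * S z (e.symm j)).symm

lemma transportMat_matOne (e : X ≃ ι) : transportMat e (matOne : X → X → ℂ) = matOne := by
  funext i j
  simp [transportMat, matOne]

lemma BoundedGeometry.exists_finset_ball [EMetricSpace X] (hBG : BoundedGeometry X)
    {R : ℝ≥0∞} (hR : R < ⊤) :
    ∃ N : ℕ, ∀ x : X, ∃ s : Finset X, s.card ≤ N ∧ ∀ y, y ∈ s ↔ edist x y ≤ R := by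
  obtain ⟨N, hN⟩ := hBG R hR
  refine ⟨N, fun x => ⟨(hN x).1.toFinset, ?_, fun y => by simp⟩⟩
  rw [← Set.ncard_eq_toFinset_card _ (hN x).1]
  exact (hN x).2

variable [EMetricSpace X]

lemma isUnifSparse_transportMat (e : X ≃ ι) (hBG : BoundedGeometry X) {T : X → X → ℂ}
    (hT : CuElem T) : IsUnifSparse (transportMat e T) := by
  obtain ⟨⟨M, hM⟩, R, hR, hsupp⟩ := hT
  obtain ⟨N, hball⟩ := hBG.exists_finset_ball hR
  choose s hs hmem using hball
  have hT0 : ∀ x y, edist x y ≤ R ∨ T x y = 0 := fun x y => by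
    by_contra! h
    exact (hsupp (a := (x, y)) h.2 : edist x y ≤ R).not_gt h.1
  refine ⟨⟨M, fun i j => hM _ _⟩, ⟨N, fun i => ⟨(s (e.symm i)).map e.toEmbedding,
    (Finset.card_map _).trans_le (hs _), fun j hj => ?_⟩⟩, ⟨N, fun j =>
      ⟨(s (e.symm j)).map e.toEmbedding, (Finset.card_map _).trans_le (hs _), fun i hi => ?_⟩⟩⟩
  · refine (hT0 _ _).resolve_left fun h => hj ?_
    simpa using (hmem _ _).mpr h
  · refine (hT0 _ _).resolve_left fun h => hi ?_
    simpa using (hmem _ _).mpr (by rwa [edist_comm])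

/-- The regular representation of `ℂ_u[X]`, on `ℓ²(ι) ≅ ℓ²(X)`. -/
def regRep (e : X ≃ ι) (T : X → X → ℂ) : ℓ²(ι, ℂ) →L[ℂ] ℓ²(ι, ℂ) := matOp (transportMat e T)

theorem isRepresentation_regRep (e : X ≃ ι) (hBG : BoundedGeometry X) :
    IsRepresentation (regRep e) where
  map_one := by rw [regRep, transportMat_matOne, matOp_matOne]
  map_add T S hT hS :=
    matOp_add (isUnifSparse_transportMat e hBG hT) (isUnifSparse_transportMat e hBG hS)
  map_smul c T hT := matOp_smul c (isUnifSparse_transportMat e hBG hT)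
  map_mul T S hT hS := by
    rw [regRep, transportMat_matMul]
    exact matOp_matMul (isUnifSparse_transportMat e hBG hT) (isUnifSparse_transportMat e hBG hS)
  map_star T hT := matOp_matStar (isUnifSparse_transportMat e hBG hT)

lemma regRep_apply (e : X ≃ ι) (hBG : BoundedGeometry X) {T : X → X → ℂ} (hT : CuElem T)
    (ξ : ℓ²(ι, ℂ)) (x : X) : regRep e T ξ (e x) = ∑' y, T x y * ξ (e y) := by
  rw [regRep, (isUnifSparse_transportMat e hBG hT).matOp_apply, ← e.tsum_eq]
  simp [transportMat]

lemma regRep_diag_apply (e : X ≃ ι) (hBG : BoundedGeometry X) {f : X → ℂ} (hf : BddFun f)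
    (ξ : ℓ²(ι, ℂ)) (x : X) : regRep e (diag f) ξ (e x) = f x * ξ (e x) := by
  rw [regRep_apply e hBG (cuElem_diag hf), tsum_eq_single x fun y hy => by simp [diag, Ne.symm hy]]
  simp [diag]

end RegularRepresentation

section NoInvariantVectors

open scoped lp

variable {X ι : Type*} [EMetricSpace X]

lemma edist_swap_apply_le (x y a : X) : edist (Equiv.swap x y a) a ≤ edist x y := by
  rw [Equiv.swap_apply_def]
  split_ifs <;> simp_all [edist_comm]

lemma isPartialTranslation_graphMat_swap {x y : X} (hxy : edist x y < ⊤) :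
    IsPartialTranslation (graphMat (Equiv.swap x y)) :=
  isPartialTranslation_graphMat (Equiv.injective _) hxy (edist_swap_apply_le x y)

/-- Transpositions of a coarsely connected space are partial translations. -/
lemma apply_eq_of_mem_invariantSubmodule_regRep (e : X ≃ ι) (hBG : BoundedGeometry X)
    (hcc : ∀ x y : X, edist x y < ⊤) {ξ : ℓ²(ι, ℂ)} (hξ : ξ ∈ invariantSubmodule (regRep e))
    (x y : X) : ξ (e x) = ξ (e y) := by
  have hv := isPartialTranslation_graphMat_swap (hcc x y)
  have hvv : matMul (graphMat (Equiv.swap x y)) (matStar (graphMat (Equiv.swap x y))) =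
      matOne := by
    rw [hv.matMul_matStar, ptRange_graphMat, (Equiv.swap x y).range_eq_univ,
      Set.indicator_univ, diag_one]
  have := congrArg (fun ζ : ℓ²(ι, ℂ) => ζ (e x)) (hξ _ hv)
  simp only [hvv, (isRepresentation_regRep e hBG).map_one, one_apply_eq_self,
    regRep_apply e hBG hv.cuElem, graphMat, ite_mul, one_mul, zero_mul] at this
  rw [tsum_eq_single y fun b hb => if_neg fun h => hb <| by
    rwa [eq_comm, Equiv.swap_apply_eq_iff, Equiv.swap_apply_left] at h] at this
  simpa using this.symm

theorem invariantSubmodule_regRep_eq_bot [Infinite X] (e : X ≃ ι) (hBG : BoundedGeometry X)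
    (hcc : ∀ x y : X, edist x y < ⊤) : invariantSubmodule (regRep e) = ⊥ := by
  have : Infinite ι := e.infinite_iff.mp inferInstance
  refine (Submodule.eq_bot_iff _).mpr fun ξ hξ => ?_
  obtain ⟨x₀⟩ := (inferInstance : Nonempty X)
  have hconst : ∀ i, ξ i = ξ (e x₀) := fun i => by
    simpa using apply_eq_of_mem_invariantSubmodule_regRep e hBG hcc hξ (e.symm i) x₀
  have hsum : Summable fun i => ‖ξ i‖ ^ 2 := by
    simpa [Real.rpow_two] using (memℓp_gen_iff (p := 2) (by norm_num)).mp (lp.memℓp ξ)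
  simp only [hconst, summable_const_iff, sq_eq_zero_iff, norm_eq_zero] at hsum
  exact lp.ext <| funext fun i => by simp [hconst i, hsum]

end NoInvariantVectors

section Expansion

open scoped lp

variable {X ι : Type*}

lemma norm_sq_eq_card_sdiff_add_card_sdiff (e : X ≃ ι) {ζ : ℓ²(ι, ℂ)} (A B : Finset X)
    (hζ : ∀ x, ζ (e x) = (if x ∈ A then 1 else 0) - (if x ∈ B then 1 else 0)) :
    ‖ζ‖ ^ 2 = (A \ B).card + (B \ A).card := by
  have hpt : ∀ x, ‖ζ (e x)‖ ^ 2 = (if x ∈ A \ B then 1 else 0) + (if x ∈ B \ A then 1 else 0) :=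
    fun x => by by_cases hA : x ∈ A <;> by_cases hB : x ∈ B <;> simp [hζ, hA, hB]
  have hnorm := lp.norm_rpow_eq_tsum (p := 2) (by norm_num) ζ
  simp only [ENNReal.toReal_ofNat, Real.rpow_two] at hnorm
  rw [hnorm, ← e.tsum_eq, tsum_eq_sum (s := A ∪ B) fun x hx => by
    simp only [Finset.mem_union, not_or] at hx
    simp [hpt, hx.1, hx.2]]
  simp only [hpt, Finset.sum_add_distrib, Finset.sum_boole]
  congr 3 <;> ext x <;> simp only [Finset.mem_filter, Finset.mem_union, Finset.mem_sdiff] <;> tauto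

def indicatorVec (e : X ≃ ι) (F : Finset X) : ℓ²(ι, ℂ) :=
  ⟨fun i => if e.symm i ∈ F then 1 else 0, memℓp_gen <| summable_of_ne_finset_zero
    (s := F.map e.toEmbedding) fun i hi => by simp_all [Finset.mem_map_equiv]⟩

lemma indicatorVec_apply (e : X ≃ ι) (F : Finset X) (x : X) :
    indicatorVec e F (e x) = if x ∈ F then 1 else 0 := by
  simp [indicatorVec]

lemma norm_indicatorVec_sq (e : X ≃ ι) (F : Finset X) : ‖indicatorVec e F‖ ^ 2 = F.card := by
  simpa using norm_sq_eq_card_sdiff_add_card_sdiff e F ∅ fun x => by simp [indicatorVec_apply]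

variable [EMetricSpace X] {v : X → X → ℂ}

lemma regRep_indicatorVec_apply (e : X ≃ ι) (hBG : BoundedGeometry X)
    (hv : IsPartialTranslation v) (F : Finset X) (x : X) :
    regRep e v (indicatorVec e F) (e x) = if ∃ y ∈ F, v x y = 1 then 1 else 0 := by
  rw [regRep_apply e hBG hv.cuElem]
  simp only [indicatorVec_apply, mul_ite, mul_one, mul_zero]
  split_ifs with h
  · obtain ⟨y, hy, hxy⟩ := h
    rw [tsum_eq_single y fun y' hy' => by
      rcases hv.1 x y' with h0 | h1
      · simp [h0]
      · exact absurd (hv.2.1 x y' y h1 hxy) hy']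
    simp [hy, hxy]
  · push Not at h
    refine (tsum_congr fun y => ?_).trans tsum_zero
    split_ifs with hy
    · exact (hv.1 x y).resolve_right (h y hy)
    · rfl

lemma regRep_matMul_matStar_indicatorVec_apply (e : X ≃ ι) (hBG : BoundedGeometry X)
    (hv : IsPartialTranslation v) (F : Finset X) (x : X) :
    regRep e (matMul v (matStar v)) (indicatorVec e F) (e x) =
      if x ∈ F ∧ x ∈ ptRange v then 1 else 0 := by
  rw [hv.matMul_matStar, regRep_diag_apply e hBG (bddFun_indicator_one _), indicatorVec_apply]
  by_cases h₁ : x ∈ F <;> by_cases h₂ : x ∈ ptRange v <;> simp [h₁, h₂]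

/-- For the partial translation `τ` with matrix `v`, the defect vector is
`1_{τ(F)} - 1_{F ∩ range τ}`, and both `τ(F) \ F` and `(F ∩ range τ) \ τ(F)` inject into
`F.biUnion t \ F`. -/
lemma norm_sq_defect_indicatorVec_le (e : X ≃ ι) (hBG : BoundedGeometry X) {R : ℝ≥0∞}
    {t : X → Finset X} (ht : ∀ x y, edist x y ≤ R → y ∈ t x) (hv : IsPartialTranslation v)
    (hvR : matSupport v ⊆ Tube X R) (F : Finset X) :
    ‖regRep e v (indicatorVec e F) - regRep e (matMul v (matStar v)) (indicatorVec e F)‖ ^ 2 ≤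
      2 * ((F.biUnion t) \ F).card := by
  have hvR' : ∀ x y, v x y = 1 → edist x y ≤ R := fun x y h =>
    hvR (show (x, y) ∈ matSupport v by simp [matSupport, h])
  set N := F.biUnion t
  set A := N.filter fun x => ∃ y ∈ F, v x y = 1
  set B := F.filter fun x => x ∈ ptRange v
  have hA : ∀ x, x ∈ A ↔ ∃ y ∈ F, v x y = 1 := fun x => by
    refine ⟨fun h => (Finset.mem_filter.mp h).2, fun ⟨y, hy, hxy⟩ => Finset.mem_filter.mpr
      ⟨Finset.mem_biUnion.mpr ⟨y, hy, ht y x ?_⟩, y, hy, hxy⟩⟩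
    rw [edist_comm]
    exact hvR' x y hxy
  have hAB : A \ B ⊆ N \ F := fun x hx => by
    obtain ⟨hxA, hxB⟩ := Finset.mem_sdiff.mp hx
    obtain ⟨y, -, hxy⟩ := (hA x).mp hxA
    refine Finset.mem_sdiff.mpr ⟨(Finset.mem_filter.mp hxA).1, fun hxF => hxB ?_⟩
    exact Finset.mem_filter.mpr ⟨hxF, y, hxy⟩
  have hBA : (B \ A).card ≤ (N \ F).card := by
    refine Finset.card_le_card_of_forall_subsingleton (fun x y => v x y = 1) (fun x hx => ?_)
      fun y _ x₁ hx₁ x₂ hx₂ => hv.2.2.1 x₁ x₂ y hx₁.2 hx₂.2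
    obtain ⟨hxB, hxA⟩ := Finset.mem_sdiff.mp hx
    obtain ⟨hxF, y, hxy⟩ := Finset.mem_filter.mp hxB
    refine ⟨y, Finset.mem_sdiff.mpr ⟨Finset.mem_biUnion.mpr ⟨x, hxF, ht x y (hvR' x y hxy)⟩,
      fun hyF => hxA ((hA x).mpr ⟨y, hyF, hxy⟩)⟩, hxy⟩
  rw [norm_sq_eq_card_sdiff_add_card_sdiff e A B fun x => by
    rw [lp.coeFn_sub, Pi.sub_apply, regRep_indicatorVec_apply e hBG hv,
      regRep_matMul_matStar_indicatorVec_apply e hBG hv]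
    simp only [hA, B, Finset.mem_filter]]
  have hAB' : ((A \ B).card : ℝ) ≤ (N \ F).card := by exact_mod_cast Finset.card_le_card hAB
  have hBA' : ((B \ A).card : ℝ) ≤ (N \ F).card := by exact_mod_cast hBA
  linarith

theorem card_le_card_biUnion_of_gap (e : X ≃ ι) (hBG : BoundedGeometry X) {R : ℝ≥0∞}
    {t : X → Finset X} (ht : ∀ x y, edist x y ≤ R → y ∈ t x) {c : ℝ} (hc : 0 ≤ c)
    (hgap : ∀ ξ : ℓ²(ι, ℂ), ∃ v, IsPartialTranslation v ∧ matSupport v ⊆ Tube X R ∧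
      c * ‖ξ‖ ≤ ‖regRep e v ξ - regRep e (matMul v (matStar v)) ξ‖) (F : Finset X) :
    (1 + c ^ 2 / 2) * F.card ≤ (F.biUnion t).card := by
  obtain ⟨v, hv, hvR, hgapF⟩ := hgap (indicatorVec e F)
  have hsq := (pow_le_pow_left₀ (by positivity) hgapF 2).trans
    (norm_sq_defect_indicatorVec_le e hBG ht hv hvR F)
  rw [mul_pow, norm_indicatorVec_sq] at hsq
  have hcard : (((F.biUnion t) \ F).card : ℝ) + F.card = (F.biUnion t).card := by
    exact_mod_cast Finset.card_sdiff_add_card_eq_card fun x hx =>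
      Finset.mem_biUnion.mpr ⟨x, hx, ht x x (by simp)⟩
  linarith

end Expansion

section Doubling

variable {α : Type*} [DecidableEq α] {t : α → Finset α}

def iterNbhd (t : α → Finset α) : ℕ → α → Finset α
  | 0 => fun x => {x}
  | k + 1 => fun x => (iterNbhd t k x).biUnion t

lemma pow_mul_card_le_card_biUnion_iterNbhd {δ : ℝ} (hδ : 0 ≤ δ)
    (hexp : ∀ F : Finset α, (1 + δ) * F.card ≤ (F.biUnion t).card) (k : ℕ) (F : Finset α) :
    (1 + δ) ^ k * F.card ≤ (F.biUnion (iterNbhd t k)).card := by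
  induction k generalizing F with
  | zero => simp [iterNbhd]
  | succ k ih =>
    have hstep : F.biUnion (iterNbhd t (k + 1)) = (F.biUnion (iterNbhd t k)).biUnion t := by
      simp [iterNbhd, Finset.biUnion_biUnion]
    calc (1 + δ) ^ (k + 1) * F.card = (1 + δ) * ((1 + δ) ^ k * F.card) := by ring
      _ ≤ (1 + δ) * (F.biUnion (iterNbhd t k)).card := by gcongr; exact ih F
      _ ≤ (F.biUnion (iterNbhd t (k + 1))).card := hstep ▸ hexp _

/-- Hall's marriage theorem, once `k` steps of `t` double every finite set. -/
theorem exists_injective_mem_iterNbhd {δ : ℝ} (hδ : 0 < δ)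
    (hexp : ∀ F : Finset α, (1 + δ) * F.card ≤ (F.biUnion t).card) :
    ∃ (k : ℕ) (f : α × Bool → α), Function.Injective f ∧ ∀ p, f p ∈ iterNbhd t k p.1 := by
  obtain ⟨k, hk⟩ := pow_unbounded_of_one_lt (2 : ℝ) (by linarith : (1 : ℝ) < 1 + δ)
  suffices hall : ∀ S : Finset (α × Bool), S.card ≤ (S.biUnion fun p => iterNbhd t k p.1).card by
    obtain ⟨f, hf, hfk⟩ := (Finset.all_card_le_biUnion_card_iff_exists_injective _).mp hall
    exact ⟨k, f, hf, hfk⟩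
  intro S
  have hS : S.card ≤ 2 * (S.image Prod.fst).card :=
    calc S.card ≤ ((S.image Prod.fst) ×ˢ (Finset.univ : Finset Bool)).card :=
          Finset.card_le_card fun p hp =>
            Finset.mem_product.mpr ⟨Finset.mem_image_of_mem _ hp, Finset.mem_univ _⟩
      _ = 2 * (S.image Prod.fst).card := by simp [mul_comm]
  have hdouble : (2 * (S.image Prod.fst).card : ℝ) ≤
      ((S.image Prod.fst).biUnion (iterNbhd t k)).card :=
    (mul_le_mul_of_nonneg_right hk.le (by positivity)).trans
      (pow_mul_card_le_card_biUnion_iterNbhd hδ.le hexp k _)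
  rw [Finset.image_biUnion] at hdouble
  exact hS.trans (by exact_mod_cast hdouble)

lemma edist_le_of_mem_iterNbhd {X : Type*} [DecidableEq X] [EMetricSpace X] {t : X → Finset X}
    {R : ℝ≥0∞} (ht : ∀ x y, y ∈ t x → edist x y ≤ R) {k : ℕ} {x y : X}
    (hy : y ∈ iterNbhd t k x) : edist x y ≤ k * R := by
  induction k generalizing y with
  | zero => simp_all [iterNbhd]
  | succ k ih =>
    obtain ⟨z, hz, hyz⟩ := Finset.mem_biUnion.mp hy
    calc edist x y ≤ edist x z + edist z y := edist_triangle _ _ _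
      _ ≤ k * R + R := add_le_add (ih hz) (ht z y hyz)
      _ = (k + 1 : ℕ) * R := by push_cast; ring

end Doubling

section Paradox

variable {X : Type*}

lemma BddFun.add {f g : X → ℂ} (hf : BddFun f) (hg : BddFun g) : BddFun (f + g) := by
  obtain ⟨M, hM⟩ := hf
  obtain ⟨N, hN⟩ := hg
  exact ⟨M + N, fun x => (norm_add_le _ _).trans (add_le_add (hM x) (hN x))⟩

/-- An invariant mean would give each of the two disjoint images of `f` mass `1`, hence their
complement mass `-1`. -/
theorem not_isAmenable_of_injective [EMetricSpace X] {f : X × Bool → X}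
    (hf : Function.Injective f) {R : ℝ≥0∞} (hR : R < ⊤) (hfR : ∀ p, edist (f p) p.1 ≤ R) :
    ¬ IsAmenable X := by
  rintro ⟨φ, hadd, -, hone, hpos, hinv⟩
  set S : Bool → Set X := fun b => Set.range fun x => f (x, b)
  have hS : ∀ b, φ ((S b).indicator 1) = 1 := fun b => by
    have hinj : Function.Injective fun x => f (x, b) := fun x y h => (Prod.ext_iff.mp (hf h)).1
    have hv := isPartialTranslation_graphMat hinj hR fun x => hfR (x, b)
    have htr : translateFun (graphMat fun x => f (x, b)) ((S b).indicator 1) = fun _ => 1 := by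
      funext x
      simp [translateFun_graphMat, S]
    rw [← hone, ← htr, hinv _ (bddFun_indicator_one _) _ hv fun x hx => ?_]
    change x ∈ ptRange _
    rw [ptRange_graphMat]
    exact Set.mem_of_indicator_ne_zero hx
  have hdisj : Disjoint (S false) (S true) := Set.disjoint_left.mpr fun _ ⟨x, hx⟩ ⟨y, hy⟩ => by
    simpa using (Prod.ext_iff.mp (hf (hx.trans hy.symm))).2
  set C := (S false ∪ S true)ᶜ
  have hsplit : (fun _ : X => (1 : ℂ)) =
      (S false).indicator 1 + ((S true).indicator 1 + C.indicator 1) := by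
    funext x
    by_cases h₀ : x ∈ S false
    · simp [C, h₀, Set.disjoint_left.mp hdisj h₀]
    · by_cases h₁ : x ∈ S true <;> simp [C, h₀, h₁]
  have hC : φ (C.indicator 1) = -1 := by
    have := congrArg φ hsplit
    rw [hadd _ _ (bddFun_indicator_one _) ((bddFun_indicator_one _).add (bddFun_indicator_one _)),
      hadd _ _ (bddFun_indicator_one _) (bddFun_indicator_one _), hone, hS, hS] at this
    linear_combination -this
  have := (hpos _ (bddFun_indicator_one C) fun x => by
    by_cases h : x ∈ C <;> simp [h]).1
  rw [hC] at this
  norm_num at this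

end Paradox

lemma countable_of_boundedGeometry {X : Type*} [EMetricSpace X] [Nonempty X]
    (hBG : BoundedGeometry X) (hcc : ∀ x y : X, edist x y < ⊤) : Countable X := by
  obtain ⟨x₀⟩ := ‹Nonempty X›
  have hcover : Set.univ = ⋃ n : ℕ, {y : X | edist x₀ y ≤ n} :=
    (Set.eq_univ_of_forall fun y => Set.mem_iUnion.mpr <|
      (ENNReal.exists_nat_gt (hcc x₀ y).ne).imp fun _ hn => hn.le).symm
  refine Set.countable_univ_iff.mp ?_
  rw [hcover]
  exact Set.countable_iUnion fun n =>
    (((hBG n (ENNReal.natCast_lt_top n)).choose_spec x₀).1).countable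

/-- The regular representation has no invariant vectors, so the gap applies to every vector. -/
lemma HasPropertyT.exists_gap_regRep {X : Type*} [EMetricSpace X] [Infinite X]
    (hT : HasPropertyT X) (hBG : BoundedGeometry X) (hcc : ∀ x y : X, edist x y < ⊤)
    (e : X ≃ ℕ) {E : Set (X × X)} (hE : Generating E) :
    ∃ c > 0, ∀ ξ, ∃ v, IsPartialTranslation v ∧ matSupport v ⊆ E ∧
      c * ‖ξ‖ ≤ ‖regRep e v ξ - regRep e (matMul v (matStar v)) ξ‖ := by
  obtain ⟨c, hc, hgap⟩ := hT E hE
  refine ⟨c, hc, fun ξ => hgap _ (regRep e) (isRepresentation_regRep e hBG) ξ ?_⟩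
  rw [invariantSubmodule_regRep_eq_bot e hBG hcc, Submodule.bot_orthogonal_eq_top]
  trivial

/-- An infinite, coarsely connected space with Property (T) is not
amenable; consequently every representation has no nonzero invariant vectors. -/
theorem statement4 {X : Type*} [EMetricSpace X] [Infinite X] (hX : IsSpace X)
    (hcc : ∀ x y : X, edist x y < ⊤) (hT : HasPropertyT X) :
    ¬ IsAmenable X ∧
      ∀ (H : Type) [NormedAddCommGroup H] [InnerProductSpace ℂ H] [CompleteSpace H]
        (π : (X → X → ℂ) → (H →L[ℂ] H)), IsRepresentation π →
        invariantSubmodule π = ⊥ := by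
  have hBG := hX.boundedGeometry
  have := countable_of_boundedGeometry hBG hcc
  let e : X ≃ ℕ := @Denumerable.eqv X (nonempty_denumerable X).some
  have hnotam : ¬ IsAmenable X := by
    obtain ⟨E, hE⟩ := hX.monogenic
    obtain ⟨R, hR, hER⟩ := hE.1
    obtain ⟨c, hc, hgap⟩ := hT.exists_gap_regRep hBG hcc e hE
    obtain ⟨_, hball⟩ := hBG.exists_finset_ball hR
    choose t _ ht using hball
    have hexp := card_le_card_biUnion_of_gap e hBG (fun x y => (ht x y).mpr) hc.le
      fun ξ => (hgap ξ).imp fun v ⟨hv, hvE, h⟩ => ⟨hv, hvE.trans hER, h⟩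
    obtain ⟨k, f, hf, hfk⟩ := exists_injective_mem_iterNbhd (by positivity : 0 < c ^ 2 / 2) hexp
    refine not_isAmenable_of_injective hf (ENNReal.mul_lt_top (ENNReal.natCast_lt_top k) hR)
      fun p => ?_
    rw [edist_comm]
    exact edist_le_of_mem_iterNbhd (fun x y => (ht x y).mp) (hfk p)
  exact ⟨hnotam, fun H _ _ _ π hπ => by_contra fun hne =>
    hnotam (isAmenable_of_invariantSubmodule_ne_bot hπ hne)⟩

end GeomPropT
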